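/- For every real number s > 1 and all real numbers x with 0 ≤ x < 1, the quantity |x^(1-1/s) - x^(1/s)| / (1 - x) is bounded by max(1 - 2/s, 2/s - 1), and in particular is at most 1. -/
import Mathlib

open Real

lemma sinh_aux {c : ℝ} (hc0 : 0 ≤ c) (hc1 : c ≤ 1) {y : ℝ} (hy : 0 ≤ y) :
    Real.sinh (c * y) ≤ c * Real.sinh y := by
  have key : MonotoneOn (fun y : ℝ => c * Real.sinh y - Real.sinh (c * y)) (Set.Ici 0) := by
    apply monotoneOn_of_deriv_nonneg (convex_Ici 0)
    · fun_prop
    · fun_prop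
    · intro t ht
      simp only [Set.mem_Ioi, interior_Ici, Set.mem_Ioi] at ht
      have : deriv (fun y : ℝ => c * Real.sinh y - Real.sinh (c * y)) t
          = c * Real.cosh t - c * Real.cosh (c * t) := by
        have h2 : HasDerivAt (fun y : ℝ => Real.sinh (c * y)) (Real.cosh (c * t) * c) t :=
          (Real.hasDerivAt_sinh (c * t)).comp t (by simpa using (hasDerivAt_id t).const_mul c)
        have h1 : HasDerivAt (fun y : ℝ => c * Real.sinh y - Real.sinh (c * y))
            (c * Real.cosh t - Real.cosh (c * t) * c) t :=
          ((Real.hasDerivAt_sinh t).const_mul c).sub h2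
        rw [h1.deriv]; ring
      rw [this]
      have hcc : Real.cosh (c * t) ≤ Real.cosh t := by
        rw [Real.cosh_le_cosh]
        rw [abs_of_nonneg (by positivity), abs_of_nonneg ht.le]
        nlinarith
      nlinarith
  have h0 : (0:ℝ) ∈ Set.Ici (0:ℝ) := Set.mem_Ici.mpr le_rfl
  have := key h0 hy hy
  simp only [mul_zero, Real.sinh_zero, sub_zero] at this
  linarith [this]

lemma key_ineq {b : ℝ} (hb0 : 0 < b) (hb : b ≤ 1/2) {x : ℝ} (hx0 : 0 < x) (hx1 : x < 1) :
    x ^ b - x ^ (1 - b) ≤ (1 - 2*b) * (1 - x) := by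
  set y : ℝ := -(Real.log x) / 2 with hy
  have hlx : Real.log x < 0 := Real.log_neg hx0 hx1
  have hy0 : 0 < y := by simp only [hy]; linarith
  have hxe : x = Real.exp (-(2*y)) := by
    simp only [hy]; rw [show -(2 * (-Real.log x / 2)) = Real.log x by ring, Real.exp_log hx0]
  have hlog : Real.log x = -(2*y) := by rw [hy]; ring
  have hpow : ∀ p : ℝ, x ^ p = Real.exp (-(2*y) * p) := by
    intro p
    rw [Real.rpow_def_of_pos hx0, hlog]
  have hs := sinh_aux (by linarith) (by linarith) hy0.le (c := 1 - 2*b)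
  rw [Real.sinh_eq, Real.sinh_eq] at hs
  have e1 : x ^ b = Real.exp (-y) * Real.exp ((1 - 2*b) * y) := by
    rw [hpow, ← Real.exp_add]; ring_nf
  have e2 : x ^ (1 - b) = Real.exp (-y) * Real.exp (-((1 - 2*b) * y)) := by
    rw [hpow, ← Real.exp_add]; ring_nf
  have e3 : (1:ℝ) - x = Real.exp (-y) * (Real.exp y - Real.exp (-y)) := by
    rw [hxe, mul_sub, ← Real.exp_add, ← Real.exp_add, show -y + y = (0:ℝ) by ring,
      show -y + -y = -(2*y) by ring, Real.exp_zero]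
  rw [e1, e2, e3]
  have hep : 0 < Real.exp (-y) := Real.exp_pos _
  nlinarith [hep]

theorem stmt_2 (s : ℝ) (hs : 1 < s) (x : ℝ) (hx0 : 0 ≤ x) (hx1 : x < 1) :
    |x ^ (1 - 1 / s) - x ^ (1 / s)| / (1 - x) ≤ max (1 - 2 / s) (2 / s - 1) ∧
    |x ^ (1 - 1 / s) - x ^ (1 / s)| / (1 - x) ≤ 1 := by
  have hs0 : 0 < s := by linarith
  have ha0 : 0 < 1/s := by positivity
  have ha1 : 1/s < 1 := by rw [div_lt_one hs0]; linarith
  have h1x : 0 < 1 - x := by linarith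
  have hmax1 : max (1 - 2 / s) (2 / s - 1) ≤ 1 := by
    apply max_le
    · have : 0 < 2 / s := by positivity
      linarith
    · have : 2 / s < 2 := by rw [div_lt_iff₀ hs0]; nlinarith
      linarith
  have main : |x ^ (1 - 1 / s) - x ^ (1 / s)| ≤ max (1 - 2 / s) (2 / s - 1) * (1 - x) := by
    rcases eq_or_lt_of_le hx0 with h0 | h0
    · rw [← h0, Real.zero_rpow (by linarith), Real.zero_rpow (by positivity)]
      simp only [sub_zero, abs_zero, sub_self]
      have hnn : 0 ≤ max (1 - 2 / s) (2 / s - 1) := by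
        rcases le_total (1 - 2/s) 0 with h | h
        · exact le_trans (by linarith) (le_max_right _ _)
        · exact le_trans h (le_max_left _ _)
      exact mul_nonneg hnn (by norm_num)
    · -- x > 0
      rcases le_total (1/s) (1 - 1/s) with hcase | hcase
      · -- b = 1/s ≤ 1-1/s, so x^(1/s) ≥ x^(1-1/s)
        have hb : 1/s ≤ 1/2 := by linarith
        have hle : x ^ (1 - 1/s) ≤ x ^ (1/s) :=
          Real.rpow_le_rpow_of_exponent_ge h0 hx1.le hcase
        rw [abs_of_nonpos (by linarith)]
        have := key_ineq ha0 hb h0 hx1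
        have hmax : 1 - 2 * (1/s) ≤ max (1 - 2 / s) (2 / s - 1) := by
          have : 1 - 2 * (1/s) = 1 - 2/s := by ring
          rw [this]; exact le_max_left _ _
        nlinarith [this, hmax]
      · -- b = 1-1/s ≤ 1/s
        have hb0' : 0 < 1 - 1/s := by linarith
        have hb : 1 - 1/s ≤ 1/2 := by linarith
        have hle : x ^ (1/s) ≤ x ^ (1 - 1/s) :=
          Real.rpow_le_rpow_of_exponent_ge h0 hx1.le hcase
        rw [abs_of_nonneg (by linarith)]
        have := key_ineq hb0' hb h0 hx1
        have heq : (1:ℝ) - (1 - 1/s) = 1/s := by ring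
        rw [heq] at this
        have hmax : 1 - 2 * (1 - 1/s) ≤ max (1 - 2 / s) (2 / s - 1) := by
          have : 1 - 2 * (1 - 1/s) = 2/s - 1 := by ring
          rw [this]; exact le_max_right _ _
        nlinarith [this, hmax]
  constructor
  · rw [div_le_iff₀ h1x]; exact main
  · rw [div_le_iff₀ h1x]
    nlinarith [main, mul_le_mul_of_nonneg_right hmax1 h1x.le]
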